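/- arXiv:1604.07289 — 5 statements merged into one kernel-verified Lean document; each statement's English description precedes it below -/
import Mathlib

section
/- Let a₁, a₂ and a₁*, a₂* be two bases of ℝ², with α₁₂ the angle between a₁ and a₂, β₁₂ the angle between a₁* and a₂*, and γᵢⱼ the angle between aᵢ and aⱼ*. Then sin²(α₁₂)·cos(β₁₂) = cos(γ₁₁)cos(γ₁₂) + cos(γ₂₁)cos(γ₂₂) − cos(α₁₂)·(cos(γ₁₁)cos(γ₂₂) + cos(γ₁₂)cos(γ₂₁)). -/
/-!
Normalise `a₁, a₂` and let `c = cos α₁₂`. The orthogonal projection onto `span {a₁, a₂}` is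
`v ↦ Σ Gⁱʲ ⟪aⱼ, v⟫ aᵢ` with `G⁻¹ = (1 - c²)⁻¹ [[1, -c], [-c, 1]]` the inverse Gram matrix, so for
`b₂` in that span, `⟪b₁, b₂⟫ = ⟪b₁, P b₂⟫` is the claimed identity times `(1 - c²)⁻¹`. In `ℝ²` the
span of a basis is everything.
-/

open InnerProductGeometry Real Module Submodule
open scoped RealInnerProductSpace

variable {E : Type*} [NormedAddCommGroup E] [InnerProductSpace ℝ E]

theorem gram_det_mul_inner_eq_of_mem_span_pair {a₁ a₂ y : E} (x : E)
    (hy : y ∈ span ℝ {a₁, a₂}) :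
    (‖a₁‖ ^ 2 * ‖a₂‖ ^ 2 - ⟪a₁, a₂⟫ ^ 2) * ⟪x, y⟫
      = ‖a₂‖ ^ 2 * (⟪a₁, x⟫ * ⟪a₁, y⟫) + ‖a₁‖ ^ 2 * (⟪a₂, x⟫ * ⟪a₂, y⟫)
        - ⟪a₁, a₂⟫ * (⟪a₁, x⟫ * ⟪a₂, y⟫ + ⟪a₁, y⟫ * ⟪a₂, x⟫) := by
  obtain ⟨s, t, rfl⟩ := mem_span_pair.mp hy
  simp only [inner_add_right, inner_smul_right, real_inner_self_eq_norm_sq,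
    real_inner_comm a₁ a₂, real_inner_comm a₁ x, real_inner_comm a₂ x]
  ring

theorem sin_sq_angle_mul_cos_angle_eq_of_mem_span_pair {a₁ a₂ y : E} (x : E)
    (h₁ : a₁ ≠ 0) (h₂ : a₂ ≠ 0) (hy : y ∈ span ℝ {a₁, a₂}) :
    sin (angle a₁ a₂) ^ 2 * cos (angle x y)
      = cos (angle a₁ x) * cos (angle a₁ y) + cos (angle a₂ x) * cos (angle a₂ y)
        - cos (angle a₁ a₂) *
          (cos (angle a₁ x) * cos (angle a₂ y) + cos (angle a₁ y) * cos (angle a₂ x)) := by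
  rcases eq_or_ne x 0 with rfl | hx
  · simp
  rcases eq_or_ne y 0 with rfl | hy₀
  · simp
  have := norm_ne_zero_iff.mpr h₁
  have := norm_ne_zero_iff.mpr h₂
  have := norm_ne_zero_iff.mpr hx
  have := norm_ne_zero_iff.mpr hy₀
  simp only [sin_sq, cos_angle]
  field_simp
  linear_combination gram_det_mul_inner_eq_of_mem_span_pair x hy

theorem mem_span_pair_of_linearIndependent_of_finrank_eq_two {a₁ a₂ : E}
    (ha : LinearIndependent ℝ ![a₁, a₂]) (hE : finrank ℝ E = 2) (y : E) :
    y ∈ span ℝ {a₁, a₂} := by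
  have hspan := ha.span_eq_top_of_card_eq_finrank (by simp [hE])
  rw [Matrix.range_cons, Matrix.range_cons, Matrix.range_empty, Set.union_empty,
    Set.singleton_union] at hspan
  simp [hspan]

theorem two_dim_beta_identity_general (a₁ a₂ b₁ b₂ : EuclideanSpace ℝ (Fin 2))
    (ha : LinearIndependent ℝ ![a₁, a₂]) :
    sin (angle a₁ a₂) ^ 2 * cos (angle b₁ b₂)
    = cos (angle a₁ b₁) * cos (angle a₁ b₂) + cos (angle a₂ b₁) * cos (angle a₂ b₂)
      - cos (angle a₁ a₂) *
        (cos (angle a₁ b₁) * cos (angle a₂ b₂) + cos (angle a₁ b₂) * cos (angle a₂ b₁)) :=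
  sin_sq_angle_mul_cos_angle_eq_of_mem_span_pair b₁
    (by simpa using ha.ne_zero 0) (by simpa using ha.ne_zero 1)
    (mem_span_pair_of_linearIndependent_of_finrank_eq_two ha finrank_euclideanSpace_fin b₂)

theorem two_dim_beta_identity (a₁ a₂ b₁ b₂ : EuclideanSpace ℝ (Fin 2))
    (ha : LinearIndependent ℝ ![a₁, a₂]) (hb : LinearIndependent ℝ ![b₁, b₂]) :
    sin (angle a₁ a₂) ^ 2 * cos (angle b₁ b₂)
    = cos (angle a₁ b₁) * cos (angle a₁ b₂) + cos (angle a₂ b₁) * cos (angle a₂ b₂)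
      - cos (angle a₁ a₂) *
        (cos (angle a₁ b₁) * cos (angle a₂ b₂) + cos (angle a₁ b₂) * cos (angle a₂ b₁)) :=
  two_dim_beta_identity_general a₁ a₂ b₁ b₂ ha
end

section
/- Let a₁, a₂ and a₁*, a₂* be two bases of ℝ² with angles α₁₂, γᵢⱼ as above. If cos(γ₁₁)cos(γ₂₁) − cos(γ₁₂)cos(γ₂₂) ≠ 0, then cos(α₁₂) = (cos²(γ₁₁) + cos²(γ₂₁) − cos²(γ₁₂) − cos²(γ₂₂)) / (2(cos(γ₁₁)cos(γ₂₁) − cos(γ₁₂)cos(γ₂₂))). -/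
/-!
Three vectors in a plane are linearly dependent, so their Gram determinant vanishes. Dividing by
the norms, this says that the cosines `c = cos ∠(a₁, a₂)`, `x = cos ∠(a₁, b)`, `y = cos ∠(a₂, b)`
satisfy `x² + y² - 2cxy = 1 - c²` for every nonzero `b`. Subtracting the instances `b = b₁` and
`b = b₂` eliminates `1 - c²` and leaves an equation that is linear in `c`.
-/

open InnerProductGeometry Real Module
open scoped RealInnerProductSpace

variable {E : Type*} [NormedAddCommGroup E] [InnerProductSpace ℝ E]

-- The Gram determinant of `a₁, a₂, b`, expanded along its last row and column.
theorem EuclideanSpace.gram_det_three_eq_zero (a₁ a₂ b : EuclideanSpace ℝ (Fin 2)) :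
    ⟪a₁, b⟫ ^ 2 * ‖a₂‖ ^ 2 + ⟪a₂, b⟫ ^ 2 * ‖a₁‖ ^ 2
      - 2 * ⟪a₁, a₂⟫ * ⟪a₁, b⟫ * ⟪a₂, b⟫
      = (‖a₁‖ ^ 2 * ‖a₂‖ ^ 2 - ⟪a₁, a₂⟫ ^ 2) * ‖b‖ ^ 2 := by
  simp only [← real_inner_self_eq_norm_sq, PiLp.inner_apply, RCLike.inner_apply,
    conj_trivial, Fin.sum_univ_two]
  ring

theorem gram_det_three_eq_zero_of_finrank_eq_two (h : finrank ℝ E = 2) (a₁ a₂ b : E) :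
    ⟪a₁, b⟫ ^ 2 * ‖a₂‖ ^ 2 + ⟪a₂, b⟫ ^ 2 * ‖a₁‖ ^ 2
      - 2 * ⟪a₁, a₂⟫ * ⟪a₁, b⟫ * ⟪a₂, b⟫
      = (‖a₁‖ ^ 2 * ‖a₂‖ ^ 2 - ⟪a₁, a₂⟫ ^ 2) * ‖b‖ ^ 2 := by
  have : FiniteDimensional ℝ E := .of_finrank_pos (by omega)
  let e := ((stdOrthonormalBasis ℝ E).reindex (finCongr h)).repr
  simpa only [LinearIsometryEquiv.inner_map_map, LinearIsometryEquiv.norm_map] using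
    EuclideanSpace.gram_det_three_eq_zero (e a₁) (e a₂) (e b)

theorem cos_angle_sq_add_cos_angle_sq_of_finrank_eq_two (h : finrank ℝ E = 2) {a₁ a₂ b : E}
    (h₁ : a₁ ≠ 0) (h₂ : a₂ ≠ 0) (hb : b ≠ 0) :
    cos (angle a₁ b) ^ 2 + cos (angle a₂ b) ^ 2
      - 2 * cos (angle a₁ a₂) * cos (angle a₁ b) * cos (angle a₂ b)
      = 1 - cos (angle a₁ a₂) ^ 2 := by
  have := norm_ne_zero_iff.2 h₁
  have := norm_ne_zero_iff.2 h₂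
  have := norm_ne_zero_iff.2 hb
  simp only [cos_angle]
  field_simp
  linear_combination gram_det_three_eq_zero_of_finrank_eq_two h a₁ a₂ b

theorem two_dim_alpha_formula_general (a₁ a₂ b₁ b₂ : EuclideanSpace ℝ (Fin 2))
    (hb : LinearIndependent ℝ ![b₁, b₂])
    (hden : cos (angle a₁ b₁) * cos (angle a₂ b₁)
      - cos (angle a₁ b₂) * cos (angle a₂ b₂) ≠ 0) :
    cos (angle a₁ a₂)
    = (cos (angle a₁ b₁) ^ 2 + cos (angle a₂ b₁) ^ 2
        - cos (angle a₁ b₂) ^ 2 - cos (angle a₂ b₂) ^ 2)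
      / (2 * (cos (angle a₁ b₁) * cos (angle a₂ b₁)
        - cos (angle a₁ b₂) * cos (angle a₂ b₂))) := by
  -- `angle 0 x = π / 2`, so a zero `aᵢ` makes both products in `hden` vanish.
  have ha₁ : a₁ ≠ 0 := by rintro rfl; simp at hden
  have ha₂ : a₂ ≠ 0 := by rintro rfl; simp at hden
  have hb₁ : b₁ ≠ 0 := by simpa using hb.ne_zero 0
  have hb₂ : b₂ ≠ 0 := by simpa using hb.ne_zero 1
  have key {b} (hb : b ≠ 0) :=
    cos_angle_sq_add_cos_angle_sq_of_finrank_eq_two finrank_euclideanSpace_fin ha₁ ha₂ hb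
  rw [eq_div_iff (mul_ne_zero two_ne_zero hden)]
  linear_combination key hb₂ - key hb₁

theorem two_dim_alpha_formula (a₁ a₂ b₁ b₂ : EuclideanSpace ℝ (Fin 2))
    (ha : LinearIndependent ℝ ![a₁, a₂]) (hb : LinearIndependent ℝ ![b₁, b₂])
    (hden : cos (angle a₁ b₁) * cos (angle a₂ b₁)
      - cos (angle a₁ b₂) * cos (angle a₂ b₂) ≠ 0) :
    cos (angle a₁ a₂)
    = (cos (angle a₁ b₁) ^ 2 + cos (angle a₂ b₁) ^ 2
        - cos (angle a₁ b₂) ^ 2 - cos (angle a₂ b₂) ^ 2)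
      / (2 * (cos (angle a₁ b₁) * cos (angle a₂ b₁)
        - cos (angle a₁ b₂) * cos (angle a₂ b₂))) :=
  two_dim_alpha_formula_general a₁ a₂ b₁ b₂ hb hden
end

section
/- Let a₁, a₂, a₃ and a₁*, a₂*, a₃* be mutually reciprocal bases of ℝ³ (⟪aᵢ, aⱼ*⟫ = δᵢⱼ). With αᵢⱼ the angle between aᵢ and aⱼ, and Δ = 2cos(α₁₂)cos(α₁₃)cos(α₂₃) − cos²(α₁₂) − cos²(α₁₃) − cos²(α₂₃) + 1, the angle γ₁₁ between a₁ and a₁* satisfies cos(γ₁₁)·sin(α₂₃) = √Δ. -/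
/-!
Write `b = a₁*` as `∑ cᵢ aᵢ`. Reciprocity says that the Gram matrix `G` of the `aᵢ` sends `c` to
the first unit vector, and also gives `‖b‖² = ⟪b, ∑ cᵢ aᵢ⟫ = c₁`; by Cramer's rule
`‖b‖² det G = adj G₁₁ = (‖a₂‖ ‖a₃‖ sin α₂₃)²`. Substituting `⟪aᵢ, aⱼ⟫ = ‖aᵢ‖ ‖aⱼ‖ cos αᵢⱼ` gives
`det G = (‖a₁‖ ‖a₂‖ ‖a₃‖)² Δ`, and `cos γ₁₁ = 1 / (‖a₁‖ ‖b‖)`, whence `(cos γ₁₁ sin α₂₃)² = Δ`.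
-/

open InnerProductGeometry Real RealInnerProductSpace Matrix

theorem norm_sq_mul_det_gram_eq_adjugate {E ι : Type*} [NormedAddCommGroup E]
    [InnerProductSpace ℝ E] [Fintype ι] [DecidableEq ι] {a : ι → E} {b : E} {k : ι}
    (hb : b ∈ Submodule.span ℝ (Set.range a)) (hab : ∀ i, ⟪a i, b⟫ = if i = k then 1 else 0) :
    ‖b‖ ^ 2 * (gram ℝ a).det = adjugate (gram ℝ a) k k := by
  obtain ⟨c, rfl⟩ := (Submodule.mem_span_range_iff_exists_fun ℝ).mp hb
  have hgram : gram ℝ a *ᵥ c = Pi.single k 1 := by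
    ext i
    rw [Pi.single_apply, ← hab i]
    simp [mulVec, dotProduct, inner_sum, real_inner_smul_right, mul_comm]
  have hnorm : ‖∑ i, c i • a i‖ ^ 2 = c k := by
    rw [← real_inner_self_eq_norm_sq, sum_inner]
    simp [real_inner_smul_left, hab]
  have hcramer := congrArg (· k) (congrArg (adjugate (gram ℝ a) *ᵥ ·) hgram)
  simp only [mulVec_mulVec, adjugate_mul, smul_mulVec, one_mulVec, mulVec_single_one] at hcramer
  simpa [hnorm, mul_comm] using hcramer

section FinThree

variable {E : Type*} [NormedAddCommGroup E] [InnerProductSpace ℝ E] (a : Fin 3 → E)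

theorem Matrix.det_gram_fin_three :
    (gram ℝ a).det = (‖a 0‖ * ‖a 1‖ * ‖a 2‖) ^ 2 *
      (2 * cos (angle (a 0) (a 1)) * cos (angle (a 0) (a 2)) * cos (angle (a 1) (a 2))
        - cos (angle (a 0) (a 1)) ^ 2 - cos (angle (a 0) (a 2)) ^ 2
        - cos (angle (a 1) (a 2)) ^ 2 + 1) := by
  simp only [det_fin_three, gram_apply, real_inner_self_eq_norm_sq, ← cos_angle_mul_norm_mul_norm,
    angle_comm (a 1) (a 0), angle_comm (a 2) (a 0), angle_comm (a 2) (a 1)]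
  ring

theorem Matrix.adjugate_gram_fin_three_zero_zero :
    adjugate (gram ℝ a) 0 0 = (‖a 1‖ * ‖a 2‖ * sin (angle (a 1) (a 2))) ^ 2 := by
  simp only [adjugate_fin_three, of_apply, cons_val', cons_val_zero, gram_apply,
    real_inner_self_eq_norm_sq]
  rw [← cos_angle_mul_norm_mul_norm, real_inner_comm, ← cos_angle_mul_norm_mul_norm]
  linear_combination -(‖a 1‖ * ‖a 2‖) ^ 2 * sin_sq_add_cos_sq (angle (a 1) (a 2))

end FinThree

theorem reciprocal_gamma_3d (a b : Fin 3 → EuclideanSpace ℝ (Fin 3))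
    (ha : LinearIndependent ℝ a)
    (hrec : ∀ i j, ⟪a i, b j⟫ = if i = j then 1 else 0) :
    cos (angle (a 0) (b 0)) * sin (angle (a 1) (a 2))
    = Real.sqrt (2 * cos (angle (a 0) (a 1)) * cos (angle (a 0) (a 2)) * cos (angle (a 1) (a 2))
        - cos (angle (a 0) (a 1)) ^ 2 - cos (angle (a 0) (a 2)) ^ 2
        - cos (angle (a 1) (a 2)) ^ 2 + 1) := by
  have hspan : b 0 ∈ Submodule.span ℝ (Set.range a) := by
    rw [ha.span_eq_top_of_card_eq_finrank' (by simp)]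
    trivial
  have hvol := norm_sq_mul_det_gram_eq_adjugate hspan (fun i ↦ hrec i 0)
  rw [det_gram_fin_three, adjugate_gram_fin_three_zero_zero] at hvol
  have hcos : cos (angle (a 0) (b 0)) * (‖a 0‖ * ‖b 0‖) = 1 := by
    rw [cos_angle_mul_norm_mul_norm, hrec, if_pos rfl]
  have hnorms : ‖a 0‖ * ‖b 0‖ * ‖a 1‖ * ‖a 2‖ ≠ 0 := by
    simp [right_ne_zero_of_mul_eq_one hcos, ha.ne_zero]
  have hcos_pos : 0 < cos (angle (a 0) (b 0)) :=
    pos_of_mul_pos_left (hcos ▸ one_pos) (by positivity)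
  rw [← Real.sqrt_sq (mul_nonneg hcos_pos.le (sin_angle_nonneg _ _))]
  congr 1
  apply mul_right_cancel₀ (pow_ne_zero 2 hnorms)
  linear_combination
    (‖a 1‖ * ‖a 2‖ * sin (angle (a 1) (a 2))) ^ 2
      * (cos (angle (a 0) (b 0)) * (‖a 0‖ * ‖b 0‖) + 1) * hcos - hvol
end

section
/- Let a₁, a₂, a₃ and a₁*, a₂*, a₃* be mutually reciprocal bases of ℝ³, with αᵢⱼ the angle between aᵢ and aⱼ and βᵢⱼ the angle between aᵢ* and aⱼ*. Then cos(β₁₂) = (cos(α₁₃)cos(α₂₃) − cos(α₁₂))/(sin(α₁₃)sin(α₂₃)). -/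
open InnerProductGeometry Real RealInnerProductSpace

/-!
The coefficients of `bᵢ` in the basis `a` are the inner products `⟪bᵢ, bₖ⟫`, so the Gram matrix of
the reciprocal basis is the inverse of the Gram matrix `G` of `a`, i.e. `adj G / det G` with
`det G > 0`. Hence `cos β₁₂` is the `(1,2)` cofactor of `G` divided by the square roots of the
`(1,1)` and `(2,2)` cofactors. These cofactors are `⟪a₁,a₃⟫⟪a₂,a₃⟫ - ⟪a₁,a₂⟫‖a₃‖²` and
`‖aᵢ‖²‖a₃‖² sin² αᵢ₃`, which is the claimed formula up to the factor `‖a₁‖‖a₂‖‖a₃‖²`.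
-/

open Matrix

section

variable {E ι : Type*} [NormedAddCommGroup E] [InnerProductSpace ℝ E]

theorem gram_mul_gram_eq_one_of_inner_eq_ite [Fintype ι] [DecidableEq ι] {a b : ι → E}
    (hb : ∀ i, b i ∈ Submodule.span ℝ (Set.range a))
    (hrec : ∀ i j, ⟪a i, b j⟫ = if i = j then 1 else 0) :
    gram ℝ b * gram ℝ a = 1 := by
  ext i j
  obtain ⟨c, hc⟩ := (Submodule.mem_span_range_iff_exists_fun ℝ).mp (hb i)
  have hcoeff : ∀ k, ⟪b i, b k⟫ = c k := by
    intro k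
    simp [← hc, sum_inner, real_inner_smul_left, hrec]
  calc (gram ℝ b * gram ℝ a) i j = ∑ k, c k * ⟪a k, a j⟫ := by simp [Matrix.mul_apply, hcoeff]
    _ = ⟪b i, a j⟫ := by simp [← hc, sum_inner, real_inner_smul_left]
    _ = (1 : Matrix ι ι ℝ) i j := by
      rw [real_inner_comm, hrec, one_apply]
      exact if_congr eq_comm rfl rfl

theorem cos_angle_eq_of_gram_eq_smul {b : ι → E} {c : ℝ} (hc : 0 < c) {M : Matrix ι ι ℝ}
    (h : gram ℝ b = c • M) (i j : ι) :
    cos (angle (b i) (b j)) = M i j / (√(M i i) * √(M j j)) := by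
  have hentry : ∀ k l, ⟪b k, b l⟫ = c * M k l := fun k l => by
    simpa using congrFun (congrFun h k) l
  have hc' : √c * √c = c := mul_self_sqrt hc.le
  rw [cos_angle, norm_eq_sqrt_real_inner, norm_eq_sqrt_real_inner, hentry, hentry, hentry,
    sqrt_mul hc.le, sqrt_mul hc.le]
  calc c * M i j / (√c * √(M i i) * (√c * √(M j j)))
      = c * M i j / (c * (√(M i i) * √(M j j))) := by rw [mul_mul_mul_comm, hc']
    _ = M i j / (√(M i i) * √(M j j)) := mul_div_mul_left _ _ hc.ne'

theorem cos_angle_mul_cos_angle_sub_cos_angle_div_sin_angle_mul_sin_angle {x y z : E}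
    (hx : x ≠ 0) (hy : y ≠ 0) (hz : z ≠ 0) :
    (cos (angle x z) * cos (angle y z) - cos (angle x y)) / (sin (angle x z) * sin (angle y z))
      = (⟪x, z⟫ * ⟪y, z⟫ - ⟪x, y⟫ * ⟪z, z⟫) /
          (√(⟪x, x⟫ * ⟪z, z⟫ - ⟪x, z⟫ * ⟪x, z⟫) * √(⟪y, y⟫ * ⟪z, z⟫ - ⟪y, z⟫ * ⟪y, z⟫)) := by
  have hx' : ‖x‖ ≠ 0 := norm_ne_zero_iff.mpr hx
  have hy' : ‖y‖ ≠ 0 := norm_ne_zero_iff.mpr hy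
  have hz' : ‖z‖ ≠ 0 := norm_ne_zero_iff.mpr hz
  rw [← sin_angle_mul_norm_mul_norm, ← sin_angle_mul_norm_mul_norm, cos_angle, cos_angle,
    cos_angle, real_inner_self_eq_norm_sq z]
  field_simp

end

theorem reciprocal_beta_3d (a b : Fin 3 → EuclideanSpace ℝ (Fin 3))
    (ha : LinearIndependent ℝ a)
    (hrec : ∀ i j, ⟪a i, b j⟫ = if i = j then 1 else 0) :
    cos (angle (b 0) (b 1))
    = (cos (angle (a 0) (a 2)) * cos (angle (a 1) (a 2)) - cos (angle (a 0) (a 1)))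
      / (sin (angle (a 0) (a 2)) * sin (angle (a 1) (a 2))) := by
  have hspan : Submodule.span ℝ (Set.range a) = ⊤ := ha.span_eq_top_of_card_eq_finrank (by simp)
  have hdet : 0 < (gram ℝ a).det := (posDef_gram_of_linearIndependent ha).det_pos
  have hgram : gram ℝ b = (gram ℝ a).det⁻¹ • adjugate (gram ℝ a) := by
    rw [← Ring.inverse_eq_inv, ← inv_def, inv_eq_left_inv
      (gram_mul_gram_eq_one_of_inner_eq_ite (fun i => hspan ▸ Submodule.mem_top) hrec)]
  rw [cos_angle_eq_of_gram_eq_smul (inv_pos.mpr hdet) hgram,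
    cos_angle_mul_cos_angle_sub_cos_angle_div_sin_angle_mul_sin_angle
      (ha.ne_zero 0) (ha.ne_zero 1) (ha.ne_zero 2)]
  simp [adjugate_fin_three, real_inner_comm]
  ring
end

section
/- Let a₁, a₂, a₃ and a₁*, a₂*, a₃* be two bases of ℝ³, with αᵢⱼ the angle between aᵢ and aⱼ and γᵢⱼ the angle between aᵢ and aⱼ*. Set Δ = 2cos(α₁₂)cos(α₁₃)cos(α₂₃) − cos²(α₁₂) − cos²(α₁₃) − cos²(α₂₃) + 1, Ω₁ = cos(α₁₂)cos(α₁₃) − cos(α₂₃), Ω₂ = cos(α₁₂)cos(α₂₃) − cos(α₁₃), Ω₃ = cos(α₁₃)cos(α₂₃) − cos(α₁₂). Then 2[cos(γ₂₁)cos(γ₃₁)Ω₁ + cos(γ₁₁)cos(γ₃₁)Ω₂ + cos(γ₁₁)cos(γ₂₁)Ω₃] + cos²(γ₃₁)sin²(α₁₂) + cos²(γ₂₁)sin²(α₁₃) + cos²(γ₁₁)sin²(α₂₃) = Δ. -/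
/-!
Let `U` be the matrix whose rows are the unit vectors `a i / ‖a i‖` and let
`w = b 0 / ‖b 0‖`. Then the Gram matrix `G = U Uᵀ` has entries `cos αᵢⱼ`, the vector `c = U w` has
entries `cos γᵢ₁`, `Δ = det G` and the left-hand side is `cᵀ (adj G) c`. Since
`adj (U Uᵀ) = (adj U)ᵀ adj U` and `adj U * U = det U • 1`, this equals `(det U)² ‖w‖² = det G`.
-/

open InnerProductGeometry Real Matrix

theorem Matrix.mulVec_dotProduct_adjugate_mul_transpose_mulVec {n R : Type*} [Fintype n]
    [DecidableEq n] [CommRing R] (U : Matrix n n R) (w : n → R) :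
    U *ᵥ w ⬝ᵥ (adjugate (U * Uᵀ) *ᵥ (U *ᵥ w)) = det (U * Uᵀ) * (w ⬝ᵥ w) := by
  have hw : adjugate U *ᵥ (U *ᵥ w) = det U • w := by
    rw [mulVec_mulVec, adjugate_mul, smul_mulVec, one_mulVec]
  rw [adjugate_mul_distrib, ← adjugate_transpose, ← mulVec_mulVec, dotProduct_mulVec,
    vecMul_transpose, hw, det_mul, det_transpose, smul_dotProduct, dotProduct_smul, smul_eq_mul,
    smul_eq_mul]
  ring

theorem EuclideanSpace.inner_dotProduct_adjugate_gram_mulVec_inner {ι : Type*} [Fintype ι]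
    [DecidableEq ι] (v : ι → EuclideanSpace ℝ ι) (w : EuclideanSpace ℝ ι) :
    (fun i ↦ inner ℝ (v i) w) ⬝ᵥ (adjugate (gram ℝ v) *ᵥ fun i ↦ inner ℝ (v i) w)
      = det (gram ℝ v) * ‖w‖ ^ 2 := by
  set U : Matrix ι ι ℝ := of fun i j ↦ v i j
  have hgram : gram ℝ v = U * Uᵀ := by
    ext i j
    simp [U, EuclideanSpace.inner_eq_star_dotProduct, mul_apply, dotProduct, mul_comm]
  have hinner : (fun i ↦ inner ℝ (v i) w) = U *ᵥ w.ofLp := by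
    ext i
    simp [U, EuclideanSpace.inner_eq_star_dotProduct, mulVec, dotProduct, mul_comm]
  have hnorm : ‖w‖ ^ 2 = w.ofLp ⬝ᵥ w.ofLp := by
    rw [← real_inner_self_eq_norm_sq, EuclideanSpace.inner_eq_star_dotProduct, star_trivial]
  rw [hgram, hinner, hnorm, mulVec_dotProduct_adjugate_mul_transpose_mulVec]

theorem InnerProductGeometry.cos_angle_eq_inner_normalize {V : Type*} [NormedAddCommGroup V]
    [InnerProductSpace ℝ V] (x y : V) :
    cos (angle x y) = inner ℝ (NormedSpace.normalize x) (NormedSpace.normalize y) := by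
  rw [NormedSpace.normalize, NormedSpace.normalize, real_inner_smul_left, real_inner_smul_right,
    cos_angle, div_eq_mul_inv, mul_inv]
  ring

theorem three_dim_angle_identity (a b : Fin 3 → EuclideanSpace ℝ (Fin 3))
    (ha : LinearIndependent ℝ a) (hb : LinearIndependent ℝ b) :
    2 * (cos (angle (a 1) (b 0)) * cos (angle (a 2) (b 0))
          * (cos (angle (a 0) (a 1)) * cos (angle (a 0) (a 2)) - cos (angle (a 1) (a 2)))
        + cos (angle (a 0) (b 0)) * cos (angle (a 2) (b 0))
          * (cos (angle (a 0) (a 1)) * cos (angle (a 1) (a 2)) - cos (angle (a 0) (a 2)))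
        + cos (angle (a 0) (b 0)) * cos (angle (a 1) (b 0))
          * (cos (angle (a 0) (a 2)) * cos (angle (a 1) (a 2)) - cos (angle (a 0) (a 1))))
      + cos (angle (a 2) (b 0)) ^ 2 * sin (angle (a 0) (a 1)) ^ 2
      + cos (angle (a 1) (b 0)) ^ 2 * sin (angle (a 0) (a 2)) ^ 2
      + cos (angle (a 0) (b 0)) ^ 2 * sin (angle (a 1) (a 2)) ^ 2
    = 2 * cos (angle (a 0) (a 1)) * cos (angle (a 0) (a 2)) * cos (angle (a 1) (a 2))
      - cos (angle (a 0) (a 1)) ^ 2 - cos (angle (a 0) (a 2)) ^ 2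
      - cos (angle (a 1) (a 2)) ^ 2 + 1 := by
  have key := EuclideanSpace.inner_dotProduct_adjugate_gram_mulVec_inner
    (fun i ↦ NormedSpace.normalize (a i)) (NormedSpace.normalize (b 0))
  simp only [adjugate_fin_three, det_fin_three, gram_apply, ← cos_angle_eq_inner_normalize,
    NormedSpace.norm_normalize (hb.ne_zero 0), angle_self (ha.ne_zero _), cos_zero,
    angle_comm (a 1) (a 0), angle_comm (a 2) (a 0), angle_comm (a 2) (a 1), dotProduct, mulVec,
    Fin.sum_univ_three, of_apply, cons_val', cons_val_fin_one, cons_val_zero, cons_val_one,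
    cons_val, one_pow, mul_one, one_mul] at key
  rw [sin_sq, sin_sq, sin_sq]
  linear_combination key
end
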